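/- arXiv:1806.06386 — 3 statements merged into one kernel-verified Lean document; each statement's English description precedes it below -/
import Mathlib

section
/- If a sequence of vectors λ₁, λ₂, … in ℤ^d is unbounded and γ₁, γ₂, … is any sequence of real numbers, then the sequence of functions x ↦ e^{iγ_n} · e^{i⟨λ_n, x⟩} on the torus 𝕋^d does not converge pointwise (i.e., there exists x ∈ 𝕋^d such that the sequence e^{iγ_n} e^{i⟨λ_n,x⟩} does not converge in ℂ). -/
open Filter Topology MeasureTheory

noncomputable def eChar {d : ℕ} (lam : Fin d → ℤ) (x : Fin d → AddCircle (2 * Real.pi)) : ℂ :=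
  ∏ j, (AddCircle.toCircle (lam j • x j) : ℂ)

/-!
If `fₙ = e^{iγₙ} e_{λₙ}` converged pointwise to some `g`, then `|g| = 1` and, by dominated convergence,
`∫ g · conj(fₘ) = lim_n ∫ fₙ · conj(fₘ)`. Since `λ` is unbounded, for every `m` infinitely many `λₙ`
differ from `λₘ`, and then `fₙ ⊥ fₘ` in `L²(𝕋^d)`; hence `g ⊥ fₘ` for all `m`. Letting `m → ∞`
gives `‖g‖₂² = 0`, contradicting `|g| = 1`.
-/

open ComplexConjugate

theorem not_ae_tendsto_of_frequently_orthogonal {α : Type*} [MeasurableSpace α]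
    {μ : Measure α} [IsFiniteMeasure μ] [NeZero μ] {f : ℕ → α → ℂ}
    (hf : ∀ n, AEStronglyMeasurable (f n) μ) (hf_norm : ∀ n x, ‖f n x‖ = 1)
    (horth : ∀ m, ∃ᶠ n in atTop, ∫ x, f n x * conj (f m x) ∂μ = 0) :
    ¬ ∀ᵐ x ∂μ, ∃ L, Tendsto (f · x) atTop (𝓝 L) := by
  intro hconv
  set g : α → ℂ := fun x => limUnder atTop (f · x)
  have hg : ∀ᵐ x ∂μ, Tendsto (f · x) atTop (𝓝 (g x)) := hconv.mono fun x => tendsto_nhds_limUnder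
  have hg_meas : AEStronglyMeasurable g μ := aestronglyMeasurable_of_tendsto_ae atTop hf hg
  have hg_norm : ∀ᵐ x ∂μ, ‖g x‖ = 1 := hg.mono fun x hx =>
    tendsto_nhds_unique hx.norm (by simp only [hf_norm, tendsto_const_nhds])
  have hconj_meas : ∀ m, AEStronglyMeasurable (fun x => conj (f m x)) μ :=
    fun m => Complex.continuous_conj.comp_aestronglyMeasurable (hf m)
  have hg_orth : ∀ m, ∫ x, g x * conj (f m x) ∂μ = 0 := by
    intro m
    have hlim : Tendsto (fun n => ∫ x, f n x * conj (f m x) ∂μ) atTop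
        (𝓝 (∫ x, g x * conj (f m x) ∂μ)) :=
      tendsto_integral_of_dominated_convergence (fun _ => 1) (fun n => (hf n).mul (hconj_meas m))
        (integrable_const 1) (fun n => ae_of_all _ fun x => by simp [hf_norm])
        (hg.mono fun x hx => hx.mul_const _)
    exact tendsto_nhds_unique_of_frequently_eq hlim tendsto_const_nhds (horth m)
  have hlim : Tendsto (fun m => ∫ x, g x * conj (f m x) ∂μ) atTop
      (𝓝 (∫ x, g x * conj (g x) ∂μ)) :=
    tendsto_integral_of_dominated_convergence (fun _ => 1) (fun m => hg_meas.mul (hconj_meas m))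
      (integrable_const 1) (fun m => hg_norm.mono fun x hx => by simp [hx, hf_norm])
      (hg.mono fun x hx => ((Complex.continuous_conj.tendsto _).comp hx).const_mul _)
  have hzero : ∫ x, g x * conj (g x) ∂μ = 0 :=
    tendsto_nhds_unique hlim (by simp only [hg_orth, tendsto_const_nhds])
  have hone : ∫ x, g x * conj (g x) ∂μ = μ.real Set.univ := by
    rw [integral_congr_ae (hg_norm.mono fun x hx => by rw [RCLike.mul_conj, hx]), integral_const]
    simp
  exact (measureReal_univ_pos (μ := μ)).ne' (by exact_mod_cast hone.symm.trans hzero)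

instance fact_two_pi_pos : Fact (0 < 2 * Real.pi) := ⟨Real.two_pi_pos⟩

local notation "𝕋" => AddCircle (2 * Real.pi)

namespace eChar

variable {d : ℕ}

lemma eq_prod_fourier (lam : Fin d → ℤ) (x : Fin d → 𝕋) :
    eChar lam x = ∏ j, fourier (lam j) (x j) := by
  simp [eChar, fourier_apply]

lemma norm_eq_one (lam : Fin d → ℤ) (x : Fin d → 𝕋) : ‖eChar lam x‖ = 1 := by
  simp [eChar, norm_prod, Circle.norm_coe]

lemma continuous (lam : Fin d → ℤ) : Continuous (eChar lam) := by
  simp_rw [funext (eq_prod_fourier lam)]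
  fun_prop

lemma mul_conj (a b : Fin d → ℤ) (x : Fin d → 𝕋) :
    eChar a x * conj (eChar b x) = eChar (a - b) x := by
  simp only [eq_prod_fourier, map_prod, ← Finset.prod_mul_distrib, ← fourier_neg, ← fourier_add,
    sub_eq_add_neg, Pi.add_apply, Pi.neg_apply]

lemma integral_eq_zero {lam : Fin d → ℤ} (h : lam ≠ 0) : ∫ x, eChar lam x = 0 := by
  obtain ⟨j, hj⟩ := Function.ne_iff.mp h
  simp only [eq_prod_fourier, volume_pi,
    integral_fintype_prod_eq_prod (f := fun j (y : 𝕋) => fourier (lam j) y)]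
  -- translating by half a period flips the sign of a nontrivial character
  exact Finset.prod_eq_zero (Finset.mem_univ j) <| integral_eq_zero_of_add_right_eq_neg
    (fourier_add_half_inv_index hj Real.two_pi_pos)

end eChar

lemma frequently_ne_of_not_norm_bounded {E : Type*} [SeminormedAddCommGroup E] {u : ℕ → E}
    (hu : ¬ ∃ C : ℝ, ∀ n, ‖u n‖ ≤ C) (a : E) : ∃ᶠ n in atTop, u n ≠ a := by
  intro hev
  have hbdd := Metric.isBounded_range_of_tendsto u
    (tendsto_nhds_of_eventually_eq (hev.mono fun _ => not_not.mp))
  exact hu ((isBounded_iff_forall_norm_le.mp hbdd).imp fun C hC n => hC _ ⟨n, rfl⟩)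

theorem stmt0 {d : ℕ} (Λ : ℕ → (Fin d → ℤ)) (γ : ℕ → ℝ)
    (hΛ : ¬ ∃ C : ℝ, ∀ n, ‖(fun j => (Λ n j : ℝ))‖ ≤ C) :
    ∃ x : Fin d → AddCircle (2 * Real.pi),
      ¬ ∃ L : ℂ, Tendsto (fun n => Complex.exp (Complex.I * γ n) * eChar (Λ n) x)
        atTop (𝓝 L) := by
  set f : ℕ → (Fin d → 𝕋) → ℂ := fun n x => Complex.exp (Complex.I * γ n) * eChar (Λ n) x
  have hf_meas : ∀ n, AEStronglyMeasurable (f n) volume :=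
    fun n => (continuous_const.mul (eChar.continuous _)).aestronglyMeasurable
  have hf_norm : ∀ n x, ‖f n x‖ = 1 := fun n x => by
    simp [f, eChar.norm_eq_one, mul_comm Complex.I, Complex.norm_exp_ofReal_mul_I]
  have horth : ∀ m, ∃ᶠ n in atTop, ∫ x, f n x * conj (f m x) = 0 := by
    intro m
    refine (frequently_ne_of_not_norm_bounded hΛ fun j => (Λ m j : ℝ)).mono fun n hne => ?_
    have hΛne : Λ n ≠ Λ m := fun h => hne (by rw [h])
    simp only [f, map_mul, mul_mul_mul_comm _ (eChar _ _), eChar.mul_conj]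
    rw [integral_const_mul, eChar.integral_eq_zero (sub_ne_zero.2 hΛne), mul_zero]
  by_contra! hconv
  exact not_ae_tendsto_of_frequently_orthogonal hf_meas hf_norm horth (ae_of_all _ hconv)
end

section
/- Let X be a compact metric space and Φ a family of self-maps of X. If for every real-valued continuous function f on X, every sequence in {f ∘ φ : φ ∈ Φ} has a pointwise convergent subsequence, then every sequence in Φ has a pointwise convergent subsequence (as maps X → X). -/
/-!
Take a countable family of continuous functions `fⱼ : X → ℝ` separating the points of `X`
(distances to a dense sequence). Applying the hypothesis to one `fⱼ` at a time and extracting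
diagonally gives a subsequence `φ_{kᵢ}` along which every `fⱼ ∘ φ_{kᵢ}` converges pointwise.
For fixed `x`, every cluster point `z` of `φ_{kᵢ} x` then has `fⱼ z` equal to the limit of
`fⱼ (φ_{kᵢ} x)` for all `j`, so by separation there is only one cluster point, and by
compactness `φ_{kᵢ} x` converges to it.
-/

open Filter Topology

theorem exists_strictMono_forall_of_forall_exists_subseq {P : ℕ → (ℕ → ℕ) → Prop}
    (hP : ∀ j s s', P j s → Tendsto s' atTop (map s atTop) → P j s')
    (hext : ∀ j s, ∃ t : ℕ → ℕ, StrictMono t ∧ P j (s ∘ t)) :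
    ∃ k : ℕ → ℕ, StrictMono k ∧ ∀ j, P j k := by
  choose T hT hTP using hext
  let G : ℕ → ℕ → ℕ := fun n => Nat.rec id (fun j s => s ∘ T j s) n
  have G_succ (j : ℕ) : G (j + 1) = G j ∘ T j (G j) := rfl
  have G_mono (n : ℕ) : StrictMono (G n) := by
    induction n with
    | zero => exact strictMono_id
    | succ j ih => exact ih.comp (hT j _)
  have G_factor (m n : ℕ) (hmn : m ≤ n) : ∃ τ, StrictMono τ ∧ G n = G m ∘ τ := by
    induction n, hmn using Nat.le_induction with
    | base => exact ⟨id, strictMono_id, rfl⟩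
    | succ n _ ih =>
      obtain ⟨τ, hτ, hG⟩ := ih
      exact ⟨τ ∘ T n (G n), hτ.comp (hT n _), by rw [G_succ, hG]; rfl⟩
  refine ⟨fun i => G i i, strictMono_nat_of_lt_succ fun i => ?_,
    fun j => hP j _ _ (hTP j (G j)) ?_⟩
  · exact G_mono i ((Nat.lt_succ_self i).trans_le (hT i _).le_apply)
  · intro S hS
    obtain ⟨N, hN⟩ := mem_atTop_sets.1 (mem_map.1 hS)
    refine mem_map.2 ?_
    filter_upwards [eventually_ge_atTop (max (j + 1) N)] with i hi
    obtain ⟨τ, hτ, hG⟩ := G_factor (j + 1) i (le_of_max_le_left hi)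
    change G i i ∈ S
    rw [hG]
    exact hN _ ((le_of_max_le_right hi).trans hτ.le_apply)

theorem exists_tendsto_of_forall_tendsto_comp {X Y ι α : Type*} [TopologicalSpace X]
    [CompactSpace X] [TopologicalSpace Y] [T2Space Y] {f : ι → X → Y}
    (hf : ∀ i, Continuous (f i)) (hsep : Pairwise fun x y => ∃ i, f i x ≠ f i y)
    {l : Filter α} [l.NeBot] {u : α → X} (hu : ∀ i, ∃ L, Tendsto (f i ∘ u) l (𝓝 L)) :
    ∃ y, Tendsto u l (𝓝 y) := by
  have eq_of_mapClusterPt {z y : X} (hz : MapClusterPt z l u) (hy : MapClusterPt y l u) (i : ι) :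
      f i z = f i y := by
    obtain ⟨L, hL⟩ := hu i
    have lim_eq {w : X} (hw : MapClusterPt w l u) : f i w = L :=
      eq_of_nhds_neBot ((hw.tendsto_comp (hf i).continuousAt).clusterPt.mono hL).neBot
    rw [lim_eq hz, lim_eq hy]
  obtain ⟨y, hy⟩ := exists_clusterPt_of_compactSpace (map u l)
  refine ⟨y, tendsto_nhds_of_unique_mapClusterPt fun z hz => ?_⟩
  by_contra hzy
  obtain ⟨i, hi⟩ := hsep hzy
  exact hi (eq_of_mapClusterPt hz hy i)

open Metric.PiNatEmbed in
theorem stmt16 {X : Type*} [MetricSpace X] [CompactSpace X] (Φ : Set (X → X))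
    (h : ∀ f : C(X, ℝ), ∀ φ : ℕ → (X → X), (∀ n, φ n ∈ Φ) →
      ∃ k : ℕ → ℕ, StrictMono k ∧
        ∀ x, ∃ L : ℝ, Tendsto (fun i => f (φ (k i) x)) atTop (𝓝 L)) :
    ∀ φ : ℕ → (X → X), (∀ n, φ n ∈ Φ) →
      ∃ k : ℕ → ℕ, StrictMono k ∧
        ∀ x, ∃ y : X, Tendsto (fun i => φ (k i) x) atTop (𝓝 y) := by
  intro φ hφ
  let f (j : ℕ) : C(X, ℝ) :=
    ⟨fun x => distDenseSeq X j x, continuous_subtype_val.comp (continuous_distDenseSeq j)⟩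
  have hsep : Pairwise fun x y => ∃ j, f j x ≠ f j y := fun x y hxy =>
    (injective_distDenseSeq x y hxy).imp fun _ => Subtype.coe_injective.ne
  obtain ⟨k, hk, hconv⟩ := exists_strictMono_forall_of_forall_exists_subseq
    (P := fun j s => ∀ x, ∃ L, Tendsto (fun i => f j (φ (s i) x)) atTop (𝓝 L))
    (fun j s s' hs hs' x => (hs x).imp fun _ hL =>
      (tendsto_map'_iff (f := fun n => f j (φ n x)).2 hL).comp hs')
    (fun j s => h (f j) (φ ∘ s) fun n => hφ (s n))
  exact ⟨k, hk, fun x => exists_tendsto_of_forall_tendsto_comp (fun j => (f j).continuous) hsep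
    fun j => hconv j x⟩
end

section
/- Every infinite subset of ℤ^d contains an infinite Sidon subset. -/
/-! Some coordinate `j` is unbounded on `Λ`, so `Λ` contains a sequence `v₀, v₁, …` whose
`j`-th coordinates `mₙ` grow at least by the factor `32`. Such a sequence is Sidon with constant
`2`, as one sees by evaluating at points `x` supported on the coordinate `j`: for coefficients
`cₙ`, nested intervals `I₀ ⊇ I₁ ⊇ ⋯` of lengths `1 / (4|mₙ|)` can be chosen so that `e^{i mₙ θ}`
stays within `1/4` of `e^{-i arg cₙ}` on `Iₙ`. At any `θ ∈ I_N` every term has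
`Re (cₙ e^{i mₙ θ}) ≥ |cₙ| / 2`, so `∑ |cₙ| ≤ 2 |P(θ)|`. -/

open Filter Topology MeasureTheory

def IsSidon {d : ℕ} (Λ : Set (Fin d → ℤ)) : Prop :=
  ∃ γ : ℝ, 0 < γ ∧ ∀ s : Finset (Fin d → ℤ), ↑s ⊆ Λ → ∀ c : (Fin d → ℤ) → ℂ,
    ∑ k ∈ s, ‖c k‖ ≤
      γ * ⨆ x : Fin d → AddCircle (2 * Real.pi), ‖∑ k ∈ s, c k * eChar k x‖

open Real Set

theorem Circle.norm_coe_exp_sub_coe_exp_le (a b : ℝ) :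
    ‖(Circle.exp a : ℂ) - Circle.exp b‖ ≤ |a - b| := by
  have h : (Circle.exp a : ℂ) - Circle.exp b = Circle.exp b * (Circle.exp (a - b) - 1) := by
    rw [mul_sub, mul_one, ← Circle.coe_mul, ← Circle.exp_add, add_sub_cancel]
  rw [h, norm_mul, Circle.norm_coe, one_mul, Circle.coe_exp, mul_comm]
  exact_mod_cast Real.norm_exp_I_mul_ofReal_sub_one_le

theorem Circle.exists_mem_Icc_exp_mul_eq {m L : ℝ} (hm : m ≠ 0) (hL : 2 * π / |m| ≤ L) (a t : ℝ) :
    ∃ θ ∈ Icc a (a + L), Circle.exp (m * θ) = Circle.exp t := by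
  have hper : Function.Periodic (fun θ => Circle.exp (m * θ)) (2 * π / |m|) := by
    rcases abs_cases m with ⟨hm', -⟩ | ⟨hm', -⟩
    · simpa [hm', div_eq_inv_mul] using Circle.periodic_exp.const_mul m
    · simpa [hm', div_eq_inv_mul] using (Circle.periodic_exp.const_mul m).neg
  obtain ⟨θ, hθ, he⟩ := hper.exists_mem_Ico (by positivity) (t / m) a
  refine ⟨θ, ⟨hθ.1, by linarith [hθ.2]⟩, ?_⟩
  rw [← he, mul_div_cancel₀ _ hm]

theorem Circle.norm_coe_exp_mul_sub_le_of_mem_Icc {m a t θ : ℝ}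
    (ha : Circle.exp (m * a) = Circle.exp t) (hθ : θ ∈ Icc a (a + 1 / (4 * |m|))) :
    ‖(Circle.exp (m * θ) : ℂ) - Circle.exp t‖ ≤ 1 / 4 := by
  rw [← ha]
  refine (norm_coe_exp_sub_coe_exp_le _ _).trans ?_
  rw [← mul_sub, abs_mul, abs_of_nonneg (sub_nonneg.2 hθ.1)]
  rcases eq_or_ne m 0 with rfl | hm
  · norm_num
  calc |m| * (θ - a) ≤ |m| * (1 / (4 * |m|)) := by gcongr; linarith [hθ.2]
    _ = 1 / 4 := by field_simp

theorem exists_Icc_forall_norm_coe_exp_mul_sub_le (m t : ℕ → ℝ) (hm : ∀ n, m n ≠ 0)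
    (hlac : ∀ n, 32 * |m n| ≤ |m (n + 1)|) (N : ℕ) :
    ∃ a, ∀ θ ∈ Icc a (a + 1 / (4 * |m N|)), ∀ n ≤ N,
      ‖(Circle.exp (m n * θ) : ℂ) - Circle.exp (t n)‖ ≤ 1 / 4 := by
  induction N with
  | zero =>
    refine ⟨t 0 / m 0, fun θ hθ n hn => ?_⟩
    obtain rfl : n = 0 := by omega
    exact Circle.norm_coe_exp_mul_sub_le_of_mem_Icc (by rw [mul_div_cancel₀ _ (hm 0)]) hθ
  | succ N ih =>
    obtain ⟨a, ha⟩ := ih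
    have hA : 0 < |m N| := abs_pos.2 (hm N)
    have hB : 0 < |m (N + 1)| := abs_pos.2 (hm (N + 1))
    -- the room left for the new interval holds a period of `θ ↦ m (N + 1) * θ`, as `8π + 1 < 32`
    have hgap : 2 * π / |m (N + 1)| ≤ 1 / (4 * |m N|) - 1 / (4 * |m (N + 1)|) := by
      rw [le_sub_iff_add_le, div_add_div _ _ hB.ne' (by positivity),
        div_le_div_iff₀ (by positivity) (by positivity)]
      nlinarith [pi_lt_d2, mul_pos hA hB, hlac N]
    obtain ⟨b, hb, hbt⟩ := Circle.exists_mem_Icc_exp_mul_eq (hm (N + 1)) hgap a (t (N + 1))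
    refine ⟨b, fun θ hθ n hn => ?_⟩
    rcases Nat.of_le_succ hn with hn | rfl
    · exact ha θ ⟨hb.1.trans hθ.1, by linarith [hθ.2, hb.2]⟩ n hn
    · exact Circle.norm_coe_exp_mul_sub_le_of_mem_Icc hbt hθ

theorem Complex.mul_coe_circleExp_neg_arg (z : ℂ) : z * Circle.exp (-z.arg) = ‖z‖ := by
  nth_rw 1 [← norm_mul_exp_arg_mul_I z]
  rw [Circle.coe_exp, mul_assoc, ← Complex.exp_add]
  push_cast
  rw [neg_mul, add_neg_cancel, Complex.exp_zero, mul_one]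

theorem Complex.norm_le_two_mul_re_mul_of_norm_sub_le {z u w : ℂ} (hu : z * u = ‖z‖)
    (hw : ‖w - u‖ ≤ 1 / 2) : ‖z‖ ≤ 2 * (z * w).re := by
  have hre : (z * w).re = ‖z‖ + (z * (w - u)).re := by
    rw [mul_sub, hu, sub_re, ofReal_re]
    ring
  have herr : ‖z * (w - u)‖ ≤ ‖z‖ * (1 / 2) := by
    rw [norm_mul]
    exact mul_le_mul_of_nonneg_left hw (norm_nonneg z)
  linarith [neg_abs_le (z * (w - u)).re, abs_re_le_norm (z * (w - u))]

theorem norm_eChar {d : ℕ} (k : Fin d → ℤ) (x : Fin d → AddCircle (2 * π)) : ‖eChar k x‖ = 1 := by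
  rw [eChar, norm_prod]
  exact Finset.prod_eq_one fun j _ => Circle.norm_coe _

theorem eChar_single {d : ℕ} (k : Fin d → ℤ) (j : Fin d) (θ : ℝ) :
    eChar k (Pi.single j (θ : AddCircle (2 * π))) = Circle.exp (k j * θ) := by
  rw [eChar, Finset.prod_eq_single j (fun i _ hi => by simp [Pi.single_eq_of_ne hi])
    (fun h => absurd (Finset.mem_univ j) h), Pi.single_eq_same, ← AddCircle.coe_zsmul,
    AddCircle.toCircle_apply_mk, div_self (by positivity), one_mul, zsmul_eq_mul]

theorem isSidon_of_forall_exists {d : ℕ} {Λ : Set (Fin d → ℤ)} {γ : ℝ} (hγ : 0 < γ)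
    (h : ∀ s : Finset (Fin d → ℤ), ↑s ⊆ Λ → ∀ c : (Fin d → ℤ) → ℂ,
      ∃ x, ∑ k ∈ s, ‖c k‖ ≤ γ * ‖∑ k ∈ s, c k * eChar k x‖) :
    IsSidon Λ := by
  refine ⟨γ, hγ, fun s hs c => ?_⟩
  obtain ⟨x, hx⟩ := h s hs c
  have hbdd : BddAbove (range fun x => ‖∑ k ∈ s, c k * eChar k x‖) :=
    ⟨∑ k ∈ s, ‖c k‖, forall_mem_range.2 fun x =>
      norm_sum_le_of_le s fun k _ => by rw [norm_mul, norm_eChar, mul_one]⟩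
  exact hx.trans (mul_le_mul_of_nonneg_left (le_ciSup hbdd x) hγ.le)

theorem isSidon_range_of_lacunary {d : ℕ} (f : ℕ → Fin d → ℤ) (j : Fin d) (hne : ∀ n, f n j ≠ 0)
    (hlac : ∀ n, 32 * |f n j| ≤ |f (n + 1) j|) : IsSidon (range f) := by
  refine isSidon_of_forall_exists two_pos fun s hs c => ?_
  choose! idx hidx using fun k (hk : k ∈ s) => hs hk
  obtain ⟨a, ha⟩ := exists_Icc_forall_norm_coe_exp_mul_sub_le (fun n => (f n j : ℝ))
    (fun n => -(c (f n)).arg) (fun n => Int.cast_ne_zero.2 (hne n))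
    (fun n => by exact_mod_cast hlac n) (s.sup idx)
  set x : Fin d → AddCircle (2 * π) := Pi.single j (a : AddCircle (2 * π))
  have hterm : ∀ k ∈ s, ‖c k‖ ≤ 2 * (c k * eChar k x).re := by
    intro k hk
    obtain ⟨n, hn, rfl⟩ : ∃ n ≤ s.sup idx, f n = k := ⟨idx k, Finset.le_sup hk, hidx k hk⟩
    rw [eChar_single]
    refine Complex.norm_le_two_mul_re_mul_of_norm_sub_le (Complex.mul_coe_circleExp_neg_arg _) ?_
    exact (ha a (left_mem_Icc.2 (le_add_of_nonneg_right (by positivity))) n hn).trans (by norm_num)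
  refine ⟨x, ?_⟩
  calc ∑ k ∈ s, ‖c k‖ ≤ ∑ k ∈ s, 2 * (c k * eChar k x).re := Finset.sum_le_sum hterm
    _ = 2 * (∑ k ∈ s, c k * eChar k x).re := by rw [Complex.re_sum, Finset.mul_sum]
    _ ≤ 2 * ‖∑ k ∈ s, c k * eChar k x‖ := by gcongr; exact Complex.re_le_norm _

theorem Set.Infinite.exists_not_bddAbove_abs_apply {ι : Type*} [Finite ι] {Λ : Set (ι → ℤ)}
    (hΛ : Λ.Infinite) : ∃ j, ¬BddAbove ((fun v => |v j|) '' Λ) := by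
  by_contra! h
  choose B hB using h
  exact hΛ ((Set.Finite.pi fun j => finite_Icc (-B j) (B j)).subset fun v hv j _ =>
    abs_le.1 (hB j ⟨v, hv, rfl⟩))

theorem exists_lacunary_seq_of_not_bddAbove {α : Type*} {S : Set α} {g : α → ℤ}
    (hg : ¬BddAbove (g '' S)) (q : ℤ) :
    ∃ f : ℕ → α, (∀ n, f n ∈ S) ∧ (∀ n, 0 < g (f n)) ∧ ∀ n, q * g (f n) < g (f (n + 1)) := by
  have : ∀ B, ∃ a ∈ S, B < g a := by simpa [not_bddAbove_iff] using hg
  choose pick hpickS hpick using this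
  let f : ℕ → α := fun n => Nat.rec (pick 0) (fun _ a => pick |q * g a|) n
  refine ⟨f, fun n => ?_, fun n => ?_, fun n => (le_abs_self _).trans_lt (hpick _)⟩
  · cases n <;> exact hpickS _
  · cases n
    · exact hpick 0
    · exact (abs_nonneg _).trans_lt (hpick _)

theorem stmt17 {d : ℕ} (Λ : Set (Fin d → ℤ)) (hΛ : Λ.Infinite) :
    ∃ Λ' : Set (Fin d → ℤ), Λ' ⊆ Λ ∧ Λ'.Infinite ∧ IsSidon Λ' := by
  obtain ⟨j, hj⟩ := hΛ.exists_not_bddAbove_abs_apply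
  obtain ⟨f, hfΛ, hpos, hlac⟩ := exists_lacunary_seq_of_not_bddAbove hj 32
  have hmono : StrictMono fun n => |f n j| :=
    strictMono_nat_of_lt_succ fun n => by linarith [hpos n, hlac n]
  exact ⟨range f, range_subset_iff.2 hfΛ,
    infinite_range_of_injective (hmono.injective.of_comp (f := fun v => |v j|)),
    isSidon_range_of_lacunary f j (fun n => abs_pos.1 (hpos n)) (fun n => (hlac n).le)⟩
end
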